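/- arXiv:2208.01432 — 11 statements merged into one kernel-verified Lean document; each statement's English description precedes it below -/
import Mathlib

section
/- Let P be a complemented poset and I an ideal of P. Then the following are equivalent: (i) I is proper; (ii) I₀ ≠ P; (iii) I ∩ I₀ = ∅, where I₀ := {x ∈ P : x' ∈ I}. -/
variable {P : Type*}

/-- Lower cone of a set. -/
def lowerCone [Preorder P] (A : Set P) : Set P := {x | ∀ y ∈ A, x ≤ y}

/-- Upper cone of a set. -/
def upperCone [Preorder P] (A : Set P) : Set P := {x | ∀ y ∈ A, y ≤ x}

/-- An ideal of a poset: nonempty, downward closed, any two elements have a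
common upper bound inside. -/
def IsIdeal [Preorder P] (I : Set P) : Prop :=
  I.Nonempty ∧ (∀ x ∈ I, ∀ y, y ≤ x → y ∈ I) ∧
    ∀ x ∈ I, ∀ y ∈ I, ∃ z ∈ I, x ≤ z ∧ y ≤ z

/-- A filter of a poset: nonempty, upward closed, any two elements have a
common lower bound inside. -/
def IsPosetFilter [Preorder P] (F : Set P) : Prop :=
  F.Nonempty ∧ (∀ x ∈ F, ∀ y, x ≤ y → y ∈ F) ∧
    ∀ x ∈ F, ∀ y ∈ F, ∃ z ∈ F, z ≤ x ∧ z ≤ y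

/-- `c` is a complementation on a bounded poset: for each `x`, `x ∨ c x` exists
and equals `⊤`, and `x ∧ c x` exists and equals `⊥`. -/
def IsComplementation [PartialOrder P] [BoundedOrder P] (c : P → P) : Prop :=
  ∀ x : P, IsLUB {x, c x} ⊤ ∧ IsGLB {x, c x} ⊥

/-- A prime ideal. -/
def IsPrimeIdeal [Preorder P] (I : Set P) : Prop :=
  IsIdeal I ∧ I ≠ Set.univ ∧ ∀ x y : P, lowerCone {x, y} ⊆ I → x ∈ I ∨ y ∈ I

/-- A prime filter. -/
def IsPrimeFilter [Preorder P] (F : Set P) : Prop :=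
  IsPosetFilter F ∧ F ≠ Set.univ ∧ ∀ x y : P, upperCone {x, y} ⊆ F → x ∈ F ∨ y ∈ F

/-- A c-ideal: an ideal of the form `F₀ = {x | c x ∈ F}` for some filter `F`. -/
def IsCIdeal [PartialOrder P] [BoundedOrder P] (c : P → P) (I : Set P) : Prop :=
  IsIdeal I ∧ ∃ F : Set P, IsPosetFilter F ∧ I = {x | c x ∈ F}

theorem stmt3 [PartialOrder P] [BoundedOrder P] (c : P → P)
    (hc : IsComplementation c) (I : Set P) (hI : IsIdeal I) :
    (I ≠ Set.univ ↔ {x : P | c x ∈ I} ≠ Set.univ) ∧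
    (I ≠ Set.univ ↔ I ∩ {x : P | c x ∈ I} = ∅) := by
  obtain ⟨hne, hdown, hdir⟩ := hI
  have key : ∀ x ∈ I, c x ∈ I → I = Set.univ := by
    intro x hx hcx
    obtain ⟨z, hz, h1, h2⟩ := hdir x hx (c x) hcx
    have hub : z ∈ upperBounds {x, c x} := by
      intro y hy; rcases hy with rfl | hy
      · exact h1
      · simp at hy; rw [hy]; exact h2
    have htop : (⊤ : P) ≤ z := (hc x).1.2 hub
    have : (⊤ : P) ∈ I := hdown z hz ⊤ htop
    exact Set.eq_univ_of_forall fun y => hdown ⊤ this y le_top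
  constructor
  · constructor
    · intro h h0
      apply h
      have hcc : c (c ⊥) ∈ I := Set.eq_univ_iff_forall.mp h0 (c ⊥)
      have hcb : c ⊥ ∈ I := Set.eq_univ_iff_forall.mp h0 ⊥
      exact key (c ⊥) hcb hcc
    · intro h h0
      apply h
      exact Set.eq_univ_of_forall fun y => h0 ▸ Set.mem_univ y
  · constructor
    · intro h
      by_contra hne2
      obtain ⟨x, hx, hcx⟩ := Set.nonempty_iff_ne_empty.mpr hne2
      exact h (key x hx hcx)
    · intro h h0
      obtain ⟨x, hx⟩ := hne
      have : x ∈ I ∩ {x : P | c x ∈ I} := ⟨hx, Set.eq_univ_iff_forall.mp h0 (c x)⟩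
      rw [h] at this
      exact this
end

section
/- Let P be a complemented poset and F a filter of P. Then the following are equivalent: (i) F is proper; (ii) F₀ ≠ P; (iii) F ∩ F₀ = ∅, where F₀ := {x ∈ P : x' ∈ F}. -/
variable {P : Type*}

theorem stmt4 [PartialOrder P] [BoundedOrder P] (c : P → P)
    (hc : IsComplementation c) (F : Set P) (hF : IsPosetFilter F) :
    (F ≠ Set.univ ↔ {x : P | c x ∈ F} ≠ Set.univ) ∧
    (F ≠ Set.univ ↔ F ∩ {x : P | c x ∈ F} = ∅) := by
  obtain ⟨hne, hup, hdown⟩ := hF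
  -- If ⊥ ∈ F then F = univ
  have hbot : (⊥ : P) ∈ F → F = Set.univ := by
    intro hb
    ext y; simp only [Set.mem_univ, iff_true]
    exact hup ⊥ hb y bot_le
  have huniv : F = Set.univ → (⊥ : P) ∈ F := fun h => h ▸ Set.mem_univ _
  have key : F ≠ Set.univ ↔ F ∩ {x : P | c x ∈ F} = ∅ := by
    constructor
    · intro hFne
      by_contra h
      obtain ⟨x, hxF, hxF0⟩ := Set.nonempty_iff_ne_empty.2 h
      obtain ⟨z, hzF, hz1, hz2⟩ := hdown x hxF (c x) hxF0
      have hzbot : z ≤ ⊥ := (hc x).2.2 (by rintro y (rfl | rfl); exacts [hz1, hz2])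
      exact hFne (hbot (hup z hzF ⊥ hzbot))
    · intro h hFe
      have : (⊥ : P) ∈ F ∩ {x : P | c x ∈ F} :=
        ⟨huniv hFe, hFe ▸ Set.mem_univ _⟩
      simp [h] at this
  refine ⟨⟨fun hFne h0 => ?_, fun h0 hFe => h0 (by rw [hFe]; ext x; simp)⟩, key⟩
  -- F₀ = univ → c ⊤ ∈ F; c ⊤ ≤ ⊥ so ⊥ ∈ F
  have hct : c ⊤ ∈ F := by have := Set.mem_univ (⊤ : P); rwa [← h0] at this
  have : c ⊤ ≤ ⊥ := (hc ⊤).2.2 (by rintro y (rfl | rfl); exacts [le_top, le_rfl])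
  exact hFne (hbot (hup _ hct ⊥ this))
end

section
/- Let P be a complemented poset with antitone complementation satisfying x'' ≤ x for all x, and let I be an ideal of P. Then I₀ := {x : x' ∈ I} is a filter of P. -/
variable {P : Type*}

theorem IsIdeal.isPosetFilter_preimage_of_antitone [Preorder P] {c : P → P} (hanti : Antitone c)
    (hdn : ∀ x, c (c x) ≤ x) {I : Set P} (hI : IsIdeal I) : IsPosetFilter (c ⁻¹' I) := by
  obtain ⟨⟨a, ha⟩, hdown, hdir⟩ := hI
  refine ⟨⟨c a, hdown a ha _ (hdn a)⟩, fun x hx y hxy ↦ hdown _ hx _ (hanti hxy), ?_⟩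
  intro x hx y hy
  obtain ⟨z, hz, hxz, hyz⟩ := hdir _ hx _ hy
  exact ⟨c z, hdown z hz _ (hdn z), (hanti hxz).trans (hdn x), (hanti hyz).trans (hdn y)⟩

theorem stmt8_general [PartialOrder P] (c : P → P)
    (hanti : ∀ x y : P, x ≤ y → c y ≤ c x)
    (hdn : ∀ x : P, c (c x) ≤ x)
    (I : Set P) (hI : IsIdeal I) :
    IsPosetFilter {x : P | c x ∈ I} :=
  hI.isPosetFilter_preimage_of_antitone (fun x y ↦ hanti x y) hdn

theorem stmt8 [PartialOrder P] [BoundedOrder P] (c : P → P)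
    (hc : IsComplementation c)
    (hanti : ∀ x y : P, x ≤ y → c y ≤ c x)
    (hdn : ∀ x : P, c (c x) ≤ x)
    (I : Set P) (hI : IsIdeal I) :
    IsPosetFilter {x : P | c x ∈ I} :=
  stmt8_general c hanti hdn I hI
end

section
/- Let P be a complemented poset whose complementation is an antitone involution, and let I be an ideal of P. Then I₀ is a filter of P and (I₀)₀ = I; in particular, I is a c-ideal of P. -/
variable {P : Type*}

theorem stmt9 [PartialOrder P] [BoundedOrder P] (c : P → P)
    (hc : IsComplementation c)
    (hanti : ∀ x y : P, x ≤ y → c y ≤ c x)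
    (hinv : ∀ x : P, c (c x) = x)
    (I : Set P) (hI : IsIdeal I) :
    IsPosetFilter {x : P | c x ∈ I} ∧
    {x : P | c x ∈ {y : P | c y ∈ I}} = I ∧
    IsCIdeal c I := by
  obtain ⟨⟨a, ha⟩, hdown, hdir⟩ := hI
  have hfilt : IsPosetFilter {x : P | c x ∈ I} := by
    refine ⟨⟨c a, ?_⟩, ?_, ?_⟩
    · simp [Set.mem_setOf_eq, hinv, ha]
    · intro x hx y hxy
      exact hdown _ hx _ (hanti _ _ hxy)
    · intro x hx y hy
      obtain ⟨z, hz, hxz, hyz⟩ := hdir _ hx _ hy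
      refine ⟨c z, by simp [Set.mem_setOf_eq, hinv, hz], ?_, ?_⟩
      · have := hanti _ _ hxz; rwa [hinv] at this
      · have := hanti _ _ hyz; rwa [hinv] at this
  have heq : {x : P | c x ∈ {y : P | c y ∈ I}} = I := by
    ext x; simp [Set.mem_setOf_eq, hinv]
  exact ⟨hfilt, heq, ⟨⟨a, ha⟩, hdown, hdir⟩, {x : P | c x ∈ I}, hfilt, heq.symm⟩
end

section
/- Let P be a complemented poset and I a prime ideal of P. Then I satisfies the c-condition: for every x ∈ P, exactly one of x, x' belongs to I. -/
variable {P : Type*}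

theorem stmt11 [PartialOrder P] [BoundedOrder P] (c : P → P)
    (hc : IsComplementation c)
    (I : Set P) (hI : IsPrimeIdeal I) :
    ∀ x : P, Xor' (x ∈ I) (c x ∈ I) := by
  intro x
  obtain ⟨⟨⟨a, haI⟩, hdown, hdir⟩, hne, hprime⟩ := hI
  have hbot : (⊥ : P) ∈ I := hdown a haI ⊥ bot_le
  obtain ⟨hlub, hglb⟩ := hc x
  -- at least one
  have h1 : x ∈ I ∨ c x ∈ I := by
    apply hprime
    intro y hy
    have : y ≤ ⊥ := hglb.2 (fun z hz => hy z hz)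
    have : y = ⊥ := le_antisymm this bot_le
    rw [this]; exact hbot
  -- not both
  have h2 : ¬ (x ∈ I ∧ c x ∈ I) := by
    rintro ⟨hx, hcx⟩
    obtain ⟨z, hz, hxz, hcxz⟩ := hdir x hx (c x) hcx
    have : (⊤ : P) ≤ z := hlub.2 (by rintro w (rfl | rfl) <;> assumption)
    have hz' : z = ⊤ := le_antisymm le_top this
    apply hne
    ext w
    simp only [Set.mem_univ, iff_true]
    exact hdown z hz w (hz' ▸ le_top)
  rcases h1 with h | h
  · exact Or.inl ⟨h, fun hc' => h2 ⟨h, hc'⟩⟩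
  · exact Or.inr ⟨h, fun hx => h2 ⟨hx, h⟩⟩
end

section
/- Let P be a complemented poset and I an ideal of P satisfying the c-condition (for every x ∈ P, exactly one of x, x' is in I). Then I is a maximal ideal of P, i.e., I is proper and every ideal strictly containing I equals P. -/
variable {P : Type*}

theorem stmt12 [PartialOrder P] [BoundedOrder P] (c : P → P)
    (hc : IsComplementation c)
    (I : Set P) (hI : IsIdeal I)
    (hcc : ∀ x : P, Xor' (x ∈ I) (c x ∈ I)) :
    I ≠ Set.univ ∧
      ∀ J : Set P, IsIdeal J → I ⊆ J → I ≠ J → J = Set.univ := by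
  constructor
  · intro h
    rcases hcc ⊤ with ⟨_, h2⟩ | ⟨_, h1⟩
    · exact h2 (h ▸ Set.mem_univ _)
    · exact h1 (h ▸ Set.mem_univ _)
  · intro J hJ hIJ hne
    obtain ⟨a, haJ, haI⟩ : ∃ a, a ∈ J ∧ a ∉ I := by
      by_contra h
      push_neg at h
      exact hne (Set.Subset.antisymm hIJ h)
    have hca : c a ∈ I := by
      rcases hcc a with ⟨h1, _⟩ | ⟨h1, _⟩
      · exact absurd h1 haI
      · exact h1
    obtain ⟨z, hzJ, haz, hcz⟩ := hJ.2.2 a haJ (c a) (hIJ hca)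
    have hz : z = ⊤ := le_antisymm le_top ((hc a).1.2 (by
      intro y hy; rcases hy with rfl | hy
      · exact haz
      · simp_all))
    have htop : (⊤ : P) ∈ J := hz ▸ hzJ
    ext x
    simp only [Set.mem_univ, iff_true]
    exact hJ.2.1 ⊤ htop x le_top
end

section
/- Let P be a distributive complemented poset and I a maximal ideal of P such that for every a ∈ P \ I the set ⋃{LU(a,i) : i ∈ I} is an ideal of P. Then I satisfies the c-condition: for every x ∈ P exactly one of x, x' lies in I. -/
variable {P : Type*}

theorem stmt13 [PartialOrder P] [BoundedOrder P] (c : P → P)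
    (hc : IsComplementation c)
    (hdist : ∀ x y z : P,
      upperCone (lowerCone {x, y} ∪ {z}) =
        upperCone (lowerCone (upperCone {x, z} ∪ upperCone {y, z})))
    (I : Set P) (hI : IsIdeal I) (hproper : I ≠ Set.univ)
    (hmax : ∀ J : Set P, IsIdeal J → I ⊆ J → I ≠ J → J = Set.univ)
    (hK : ∀ a : P, a ∉ I → IsIdeal (⋃ i ∈ I, lowerCone (upperCone {a, i}))) :
    ∀ x : P, Xor' (x ∈ I) (c x ∈ I) := by
  obtain ⟨hne, hdown, hdir⟩ := hI
  have notboth : ∀ x : P, x ∈ I → c x ∈ I → False := by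
    intro x hx hcx
    obtain ⟨z, hz, hxz, hcxz⟩ := hdir x hx (c x) hcx
    have htop : (⊤ : P) ≤ z := (hc x).1.2 (by
      intro y hy
      rcases hy with rfl | hy
      · exact hxz
      · rcases hy with rfl; exact hcxz)
    apply hproper
    ext y
    simp only [Set.mem_univ, iff_true]
    exact hdown z hz y (le_trans le_top htop)
  have atleast : ∀ x : P, x ∉ I → c x ∈ I := by
    intro x hx
    by_contra hcx
    set K := ⋃ i ∈ I, lowerCone (upperCone {x, i}) with hKdef
    obtain ⟨i0, hi0⟩ := hne
    have hxK : x ∈ K :=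
      Set.mem_biUnion hi0 (fun u hu => hu x (Or.inl rfl))
    have hIK : I ⊆ K := fun i hi =>
      Set.mem_biUnion hi (fun u hu => hu i (Or.inr rfl))
    have hKuniv : K = Set.univ := by
      apply hmax K (hK x hx) hIK
      intro h
      rw [h] at hx
      exact hx hxK
    have hcxK : c x ∈ K := by rw [hKuniv]; exact Set.mem_univ _
    rw [hKdef] at hcxK
    simp only [Set.mem_iUnion, exists_prop] at hcxK
    obtain ⟨i, hi, hcxi⟩ := hcxK
    -- every upper bound of {x, i} equals ⊤
    have hUxi : ∀ u, u ∈ upperCone ({x, i} : Set P) → u = ⊤ := by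
      intro u hu
      have hcxu : c x ≤ u := hcxi u hu
      have hxu : x ≤ u := hu x (Or.inl rfl)
      have : (⊤ : P) ≤ u := (hc x).1.2 (by
        intro y hy
        rcases hy with rfl | hy
        · exact hxu
        · rcases hy with rfl; exact hcxu)
      exact le_antisymm le_top this
    have hd := hdist x (c x) i
    have hiL : i ∈ upperCone (lowerCone {x, c x} ∪ {i}) := by
      intro y hy
      rcases hy with hy | hy
      · have hyb : y ≤ (⊥ : P) := (hc x).2.2 (fun z hz => hy z hz)
        exact le_trans hyb bot_le
      · rcases hy with rfl; exact le_refl _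
    rw [hd] at hiL
    have hcxlow : c x ∈ lowerCone (upperCone ({x, i} : Set P) ∪ upperCone ({c x, i} : Set P)) := by
      intro u hu
      rcases hu with hu | hu
      · rw [hUxi u hu]; exact le_top
      · exact hu (c x) (Or.inl rfl)
    have hcxile : c x ≤ i := hiL (c x) hcxlow
    exact hcx (hdown i hi (c x) hcxile)
  intro x
  by_cases hx : x ∈ I
  · exact Or.inl ⟨hx, fun hcx => notboth x hx hcx⟩
  · exact Or.inr ⟨atleast x hx, hx⟩
end

section
/- (First Separation Theorem) Let P be a complemented poset with antitone complementation satisfying x ≤ x'' for all x, let I be an ideal and F a filter of P satisfying the c-condition (for every x ∈ P exactly one of x, x' is in F), with I ∩ F = ∅. Then there exists a c-ideal J of P with I ⊆ J and J ∩ F = ∅. -/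
variable {P : Type*}

theorem stmt15 [PartialOrder P] [BoundedOrder P] (c : P → P)
    (hc : IsComplementation c)
    (hanti : ∀ x y : P, x ≤ y → c y ≤ c x)
    (hdn : ∀ x : P, x ≤ c (c x))
    (I F : Set P) (hI : IsIdeal I) (hF : IsPosetFilter F)
    (hcc : ∀ x : P, Xor' (x ∈ F) (c x ∈ F))
    (hIF : I ∩ F = ∅) :
    ∃ J : Set P, IsCIdeal c J ∧ I ⊆ J ∧ J ∩ F = ∅ := by
  classical
  obtain ⟨hFne, hFup, hFlow⟩ := hF
  obtain ⟨hIne, hIdown, hIub⟩ := hI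
  refine ⟨{x | c x ∈ F}, ⟨⟨?_, ?_, ?_⟩, F, ⟨hFne, hFup, hFlow⟩, rfl⟩, ?_, ?_⟩
  · obtain ⟨x, hx⟩ := hIne
    refine ⟨x, ?_⟩
    have hxF : x ∉ F := fun hxF => by
      have : x ∈ I ∩ F := ⟨hx, hxF⟩
      simp [hIF] at this
    rcases hcc x with ⟨_, _⟩ | ⟨h2, _⟩
    · exact absurd ‹x ∈ F› hxF
    · exact h2
  · intro x hx y hyx
    exact hFup _ hx _ (hanti _ _ hyx)
  · intro x hx y hy
    obtain ⟨z, hz, hzx, hzy⟩ := hFlow _ hx _ hy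
    refine ⟨c z, hFup _ hz _ (hdn z), ?_, ?_⟩
    · exact le_trans (hdn x) (hanti _ _ hzx)
    · exact le_trans (hdn y) (hanti _ _ hzy)
  · intro x hx
    have hxF : x ∉ F := fun hxF => by
      have : x ∈ I ∩ F := ⟨hx, hxF⟩
      simp [hIF] at this
    rcases hcc x with ⟨h1, _⟩ | ⟨h2, _⟩
    · exact absurd h1 hxF
    · exact h2
  · ext x
    simp only [Set.mem_inter_iff, Set.mem_setOf_eq, Set.mem_empty_iff_false, iff_false]
    rintro ⟨hcx, hxF⟩
    rcases hcc x with ⟨_, h⟩ | ⟨_, h⟩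
    · exact h hcx
    · exact h hxF
end

section
/- Let P be a complemented poset with antitone complementation satisfying x ≤ x'' for all x, let I be an ideal and F a prime filter of P with I ∩ F = ∅. Then there exists a c-ideal J of P with I ⊆ J and J ∩ F = ∅. -/
variable {P : Type*}

theorem stmt16 [PartialOrder P] [BoundedOrder P] (c : P → P)
    (hc : IsComplementation c)
    (hanti : ∀ x y : P, x ≤ y → c y ≤ c x)
    (hdn : ∀ x : P, x ≤ c (c x))
    (I F : Set P) (hI : IsIdeal I) (hF : IsPrimeFilter F)
    (hIF : I ∩ F = ∅) :
    ∃ J : Set P, IsCIdeal c J ∧ I ⊆ J ∧ J ∩ F = ∅ := by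
  obtain ⟨⟨i0, hi0⟩, hIdown, hIdir⟩ := hI
  obtain ⟨⟨⟨f0, hf0⟩, hFup, hFdir⟩, hFne, hFprime⟩ := hF
  set G : Set P := {y | ∃ i ∈ I, c i ≤ y} with hG
  set J : Set P := {x | c x ∈ G} with hJdef
  have hdisj : ∀ x, x ∈ I → x ∉ F := by
    intro x hx hxF
    have : x ∈ I ∩ F := ⟨hx, hxF⟩
    rw [hIF] at this; exact this
  have htop : (⊤ : P) ∈ F := hFup f0 hf0 ⊤ le_top
  have hGfilter : IsPosetFilter G := by
    refine ⟨⟨c i0, i0, hi0, le_rfl⟩, ?_, ?_⟩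
    · rintro x ⟨i, hi, hle⟩ y hxy; exact ⟨i, hi, hle.trans hxy⟩
    · rintro x ⟨i, hi, hix⟩ y ⟨j, hj, hjy⟩
      obtain ⟨z, hz, hiz, hjz⟩ := hIdir i hi j hj
      exact ⟨c z, ⟨z, hz, le_rfl⟩, (hanti _ _ hiz).trans hix, (hanti _ _ hjz).trans hjy⟩
  have hIJ : I ⊆ J := fun x hx => ⟨x, hx, le_rfl⟩
  refine ⟨J, ⟨⟨⟨i0, hIJ hi0⟩, ?_, ?_⟩, G, hGfilter, rfl⟩, hIJ, ?_⟩
  · rintro x ⟨i, hi, hix⟩ y hyx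
    exact ⟨i, hi, hix.trans (hanti _ _ hyx)⟩
  · rintro x ⟨i, hi, hix⟩ y ⟨j, hj, hjy⟩
    obtain ⟨z, hz, hiz, hjz⟩ := hIdir i hi j hj
    refine ⟨c (c z), ⟨z, hz, hdn (c z)⟩, ?_, ?_⟩
    · exact (hdn x).trans (hanti _ _ ((hanti _ _ hiz).trans hix))
    · exact (hdn y).trans (hanti _ _ ((hanti _ _ hjz).trans hjy))
  · ext x
    simp only [Set.mem_inter_iff, Set.mem_empty_iff_false, iff_false, not_and]
    rintro ⟨i, hi, hix⟩ hxF
    -- upperCone {i, c i} = {⊤} ⊆ F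
    have hup : upperCone {i, c i} ⊆ F := by
      intro u hu
      have h1 : i ≤ u := hu i (Or.inl rfl)
      have h2 : c i ≤ u := hu (c i) (Or.inr rfl)
      have : (⊤ : P) ≤ u := (hc i).1.2 (by rintro v (rfl | rfl) <;> assumption)
      exact hFup ⊤ htop u this
    have hci : c i ∈ F := by
      rcases hFprime i (c i) hup with h | h
      · exact absurd h (hdisj i hi)
      · exact h
    have hcx : c x ∈ F := hFup (c i) hci (c x) hix
    obtain ⟨z, hz, hzx, hzcx⟩ := hFdir x hxF (c x) hcx
    have hzbot : z ≤ ⊥ := (hc x).2.2 (by rintro v (rfl | rfl) <;> assumption)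
    have : (⊥ : P) ∈ F := hFup z hz ⊥ hzbot
    apply hFne
    ext u; simp only [Set.mem_univ, iff_true]
    exact hFup ⊥ this u bot_le
end

section
/- Let P be a distributive complemented poset with antitone complementation. Then the complementation is an involution: x'' = x for all x ∈ P. -/
variable {P : Type*}

theorem stmt17 [PartialOrder P] [BoundedOrder P] (c : P → P)
    (hc : IsComplementation c)
    (hanti : ∀ x y : P, x ≤ y → c y ≤ c x)
    (hdist : ∀ x y z : P,
      lowerCone (upperCone {x, y} ∪ {z}) =
        lowerCone (upperCone (lowerCone {x, z} ∪ lowerCone {y, z}))) :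
    ∀ x : P, c (c x) = x := by
  -- uniqueness of complements in a distributive poset
  have uniq : ∀ a y z : P, IsLUB {a, y} ⊤ → IsGLB {a, y} ⊥ →
      IsLUB {a, z} ⊤ → IsGLB {a, z} ⊥ → y ≤ z := by
    intro a y z _h1 h2 h3 _h4
    have key := hdist a z y
    have hy : y ∈ lowerCone (upperCone ({a, z} : Set P) ∪ {y}) := by
      intro t ht
      rcases ht with ht | ht
      · have htop : (⊤ : P) ≤ t := h3.2 (fun u hu => ht u hu)
        exact le_trans le_top htop
      · rcases ht with rfl; exact le_rfl
    rw [key] at hy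
    have hz : z ∈ upperCone (lowerCone ({a, y} : Set P) ∪ lowerCone ({z, y} : Set P)) := by
      intro t ht
      rcases ht with ht | ht
      · have hbot : t ≤ (⊥ : P) := h2.2 (fun u hu => ht u hu)
        exact le_trans hbot bot_le
      · exact ht z (by simp)
    exact hy z hz
  intro x
  have h1 := hc (c x)
  have h2 := hc x
  have hpair : ({x, c x} : Set P) = {c x, x} := Set.pair_comm x (c x)
  rw [hpair] at h2
  exact le_antisymm
    (uniq (c x) (c (c x)) x h1.1 h1.2 h2.1 h2.2)
    (uniq (c x) x (c (c x)) h2.1 h2.2 h1.1 h1.2)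
end

section
/- Let P be a poset. Every ideal of P is principal (of the form L(a) for some a) if and only if P satisfies the Ascending Chain Condition (no strictly increasing infinite sequence exists). -/
variable {P : Type*}

theorem stmt19 [PartialOrder P] :
    (∀ I : Set P, IsIdeal I → ∃ a : P, I = {x : P | x ≤ a}) ↔
      ¬∃ f : ℕ → P, StrictMono f := by
  constructor
  · rintro h ⟨f, hf⟩
    obtain ⟨a, ha⟩ := h {x | ∃ n, x ≤ f n} ⟨⟨f 0, 0, le_rfl⟩,
      fun x ⟨n, hn⟩ y hy => ⟨n, hy.trans hn⟩,
      fun x ⟨n, hn⟩ y ⟨m, hm⟩ => ⟨f (max n m), ⟨max n m, le_rfl⟩,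
        hn.trans (hf.monotone (le_max_left n m)), hm.trans (hf.monotone (le_max_right n m))⟩⟩
    have h1 : a ∈ {x : P | ∃ n, x ≤ f n} := by rw [ha]; exact le_rfl
    obtain ⟨n, hn⟩ := h1
    have h2 : f (n + 1) ∈ {x : P | x ≤ a} := by rw [← ha]; exact ⟨n + 1, le_rfl⟩
    exact absurd (le_trans h2 hn) ((hf (Nat.lt_succ_self n)).not_ge)
  · intro h I hI
    by_contra hc
    push_neg at hc
    have key : ∀ a ∈ I, ∃ b ∈ I, a < b := by
      intro a ha
      have hns : ¬ I ⊆ {x | x ≤ a} := by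
        intro hsub
        exact hc a (Set.Subset.antisymm hsub (fun x hx => hI.2.1 a ha x hx))
      obtain ⟨b, hb, hba⟩ := Set.not_subset.mp hns
      obtain ⟨z, hz, haz, hbz⟩ := hI.2.2 a ha b hb
      exact ⟨z, hz, lt_of_le_of_ne haz (fun e => hba (e ▸ hbz))⟩
    obtain ⟨a0, ha0⟩ := hI.1
    choose g hg hlt using key
    let F : ℕ → {x // x ∈ I} := fun n =>
      Nat.rec ⟨a0, ha0⟩ (fun _ p => ⟨g p.1 p.2, hg p.1 p.2⟩) n
    exact h ⟨fun n => (F n).1, strictMono_nat_of_lt_succ fun n => hlt (F n).1 (F n).2⟩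
end
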